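/- For every integer d ≥ 1 there is a constant K_d > 0 such that for all integers p ≥ 1 and n ≥ 1 and all γ, h ∈ Γ_d: if h^p = γ and d(1,γ) ≤ n, then d(1,h) ≤ K_d · n. -/

import Mathlib

namespace ModelFiliform

/-- The "down-shift" endomorphism `N` of `ℤ^d`: `(N x) j = x (j-1)` for `j ≥ 1`, `(N x) 0 = 0`.
The automorphism `φ` of the model filiform group is `1 + N`. -/
def shiftMap (d : ℕ) : (Fin d → ℤ) →ₗ[ℤ] (Fin d → ℤ) where
  toFun x := fun j =>
    if _h : 1 ≤ (j : ℕ) then x ⟨(j : ℕ) - 1, lt_of_le_of_lt (Nat.sub_le _ _) j.isLt⟩ else 0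
  map_add' x y := by funext j; by_cases h : 1 ≤ (j : ℕ) <;> simp [h]
  map_smul' c x := by funext j; by_cases h : 1 ≤ (j : ℕ) <;> simp [h]

theorem shiftMap_apply (d : ℕ) (x : Fin d → ℤ) (j : Fin d) :
    shiftMap d x j =
      if _h : 1 ≤ (j : ℕ) then x ⟨(j : ℕ) - 1, lt_of_le_of_lt (Nat.sub_le _ _) j.isLt⟩ else 0 :=
  rfl

theorem shiftMap_pow_apply (d k : ℕ) (x : Fin d → ℤ) (j : Fin d) :
    ((shiftMap d ^ k) x) j =
      if _h : k ≤ (j : ℕ) then x ⟨(j : ℕ) - k, lt_of_le_of_lt (Nat.sub_le _ _) j.isLt⟩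
      else 0 := by
  induction k generalizing x with
  | zero => simp
  | succ k ih =>
      rw [pow_succ, Module.End.mul_apply, ih]
      by_cases h1 : k ≤ (j : ℕ)
      · rw [dif_pos h1, shiftMap_apply]
        by_cases h2 : k + 1 ≤ (j : ℕ)
        · rw [dif_pos (show 1 ≤ (j : ℕ) - k by omega), dif_pos h2]
          have hab : (j : ℕ) - k - 1 = (j : ℕ) - (k + 1) := by omega
          simp only [hab]
        · rw [dif_neg (show ¬ 1 ≤ (j : ℕ) - k by omega), dif_neg h2]
      · rw [dif_neg h1, dif_neg (by omega)]

theorem shiftMap_nilpotent (d : ℕ) : IsNilpotent (shiftMap d) := by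
  refine ⟨d, ?_⟩
  apply LinearMap.ext
  intro x
  funext j
  rw [shiftMap_pow_apply, dif_neg (by omega)]
  rfl

/-- `φ = 1 + N` as a unit of the endomorphism ring of `ℤ^d`. -/
noncomputable def phiUnit (d : ℕ) : (Module.End ℤ (Fin d → ℤ))ˣ :=
  ((shiftMap_nilpotent d).isUnit_one_add).unit

/-- The automorphism `φ` of `ℤ^d`: writing `ℤ^d` multiplicatively with basis `a_1, …, a_d`
(where `a_{i+1}` is the `i`-th standard basis vector, `i : Fin d`), it fixes `a_d` and sends
`a_i ↦ a_i a_{i+1}` for `1 ≤ i < d`. -/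
noncomputable def phi (d : ℕ) : (Fin d → ℤ) ≃ₗ[ℤ] (Fin d → ℤ) :=
  LinearMap.GeneralLinearGroup.generalLinearEquiv ℤ _ (phiUnit d)

/-- `φ` as a multiplicative automorphism of `Multiplicative ℤ^d`. -/
noncomputable def phiAut (d : ℕ) : MulAut (Multiplicative (Fin d → ℤ)) :=
  AddEquiv.toMultiplicative (phi d).toAddEquiv

/-- The action of `ℤ` on `ℤ^d` defining `Γ_d = ℤ^d ⋊_φ ℤ`: the generator `t` acts by
`t x t⁻¹ = φ⁻¹(x)`, so that `t⁻¹ a_i t = φ(a_i)`, i.e. `t⁻¹ a_i t = a_i a_{i+1}` for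
`1 ≤ i < d` and `t⁻¹ a_d t = a_d`. -/
noncomputable def act (d : ℕ) : Multiplicative ℤ →* MulAut (Multiplicative (Fin d → ℤ)) :=
  zpowersHom _ (phiAut d)⁻¹

/-- The discrete model filiform group `Γ_d = ℤ^d ⋊_φ ℤ`. -/
abbrev Gamma (d : ℕ) : Type :=
  SemidirectProduct (Multiplicative (Fin d → ℤ)) (Multiplicative ℤ) (act d)

/-- The generator `t` of `Γ_d`. -/
noncomputable def tGen (d : ℕ) : Gamma d :=
  SemidirectProduct.inr (Multiplicative.ofAdd (1 : ℤ))

/-- The generators `a_1, …, a_d` of `Γ_d`: here `aGen d i` is `a_{i+1}` (as `i : Fin d` is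
0-indexed), so `a_1 = aGen d ⟨0, _⟩` and `a_d = aGen d ⟨d-1, _⟩`. -/
noncomputable def aGen (d : ℕ) (i : Fin d) : Gamma d :=
  SemidirectProduct.inl (Multiplicative.ofAdd (Pi.single i (1 : ℤ)))

/-- The standard generating set `{a_1, …, a_d, t}` of `Γ_d`. -/
noncomputable def gens (d : ℕ) : Set (Gamma d) := insert (tGen d) (Set.range (aGen d))

/-- The word length `d(1,g)` of `g ∈ Γ_d` with respect to the standard generators: the least
`n` such that `g` is a product of `n` elements of `{a_1^{±1}, …, a_d^{±1}, t^{±1}}`. -/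
noncomputable def wl (d : ℕ) (g : Gamma d) : ℕ :=
  sInf {n | ∃ l : List (Gamma d), l.length = n ∧
    (∀ x ∈ l, x ∈ gens d ∨ x⁻¹ ∈ gens d) ∧ l.prod = g}

/-- The subgroup `A_d = ℤ^d ⋊ 1 = ⟨a_1, …, a_d⟩` of `Γ_d`. -/
noncomputable def A (d : ℕ) : Subgroup (Gamma d) := Subgroup.closure (Set.range (aGen d))

open Polynomial Multiplicative

variable {d : ℕ}

/-- `φ^m` as an endomorphism of `ℤ^d`. -/
noncomputable def Uop (d : ℕ) (m : ℤ) : Module.End ℤ (Fin d → ℤ) :=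
  ((phiUnit d ^ m : (Module.End ℤ (Fin d → ℤ))ˣ) : Module.End ℤ (Fin d → ℤ))

theorem phiUnit_val (d : ℕ) :
    ((phiUnit d : (Module.End ℤ (Fin d → ℤ))ˣ) : Module.End ℤ (Fin d → ℤ))
      = 1 + shiftMap d := IsUnit.unit_spec _

theorem Uop_zero (d : ℕ) : Uop d 0 = 1 := by simp [Uop]

theorem Uop_add (m m' : ℤ) : Uop d (m + m') = Uop d m * Uop d m' := by
  simp [Uop, zpow_add]

theorem Uop_one (d : ℕ) : Uop d 1 = 1 + shiftMap d := by
  simp [Uop, phiUnit_val]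

theorem phiAut_apply (v : Multiplicative (Fin d → ℤ)) :
    phiAut d v = ofAdd (Uop d 1 (toAdd v)) := by
  simp [phiAut, phi, Uop, AddEquiv.toMultiplicative, phiUnit_val]

theorem phiAut_symm_apply (v : Multiplicative (Fin d → ℤ)) :
    (phiAut d)⁻¹ v = ofAdd (Uop d (-1) (toAdd v)) := by
  apply (phiAut d).injective
  rw [MulAut.apply_inv_self, phiAut_apply]
  have : Uop d 1 (toAdd (ofAdd (Uop d (-1) (toAdd v)))) = (Uop d 1 * Uop d (-1)) (toAdd v) := rfl
  rw [this, ← Uop_add]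
  simp [Uop_zero]

theorem phiAut_zpow_apply (m : ℤ) (v : Multiplicative (Fin d → ℤ)) :
    (phiAut d ^ m) v = ofAdd (Uop d m (toAdd v)) := by
  induction m using Int.induction_on generalizing v with
  | zero => simp [Uop_zero]
  | succ k ih =>
      rw [zpow_add_one]
      have h1 : (phiAut d ^ (k:ℤ) * phiAut d) v = (phiAut d ^ (k:ℤ)) (phiAut d v) := rfl
      rw [h1, phiAut_apply, ih, show ((k:ℤ) + 1) = (k:ℤ) + 1 from rfl, Uop_add]
      simp only [toAdd_ofAdd]
      rfl
  | pred k ih =>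
      rw [zpow_sub_one]
      have h1 : (phiAut d ^ (-(k:ℤ)) * (phiAut d)⁻¹) v = (phiAut d ^ (-(k:ℤ))) ((phiAut d)⁻¹ v) := rfl
      rw [h1, phiAut_symm_apply, ih, show -(k:ℤ) - 1 = -(k:ℤ) + -1 by ring, Uop_add]
      simp only [toAdd_ofAdd]
      rfl

theorem act_apply (m : ℤ) (v : Multiplicative (Fin d → ℤ)) :
    act d (ofAdd m) v = ofAdd (Uop d (-m) (toAdd v)) := by
  have : act d (ofAdd m) = ((phiAut d)⁻¹) ^ m := by
    simp [act, zpowersHom_apply]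
  rw [this, inv_zpow', phiAut_zpow_apply]

/-- The pure-translation embedding. -/
noncomputable def ι (d : ℕ) (v : Fin d → ℤ) : Gamma d :=
  SemidirectProduct.inl (ofAdd v)

/-- Powers of `t`. -/
noncomputable def τ (d : ℕ) (m : ℤ) : Gamma d :=
  SemidirectProduct.inr (ofAdd m)

/-- The translation part. -/
def vec {d : ℕ} (g : Gamma d) : Fin d → ℤ := toAdd g.left

/-- The `t`-exponent. -/
def kk {d : ℕ} (g : Gamma d) : ℤ := toAdd g.right

theorem vec_mul (g h : Gamma d) : vec (g * h) = vec g + Uop d (-(kk g)) (vec h) := by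
  show toAdd (g.left * act d g.right h.left) = _
  rw [toAdd_mul]
  congr 1
  have : act d g.right h.left = act d (ofAdd (kk g)) (ofAdd (vec h)) := rfl
  rw [this, act_apply]
  rfl

theorem kk_mul (g h : Gamma d) : kk (g * h) = kk g + kk h := rfl

theorem vec_iota (v : Fin d → ℤ) : vec (ι d v) = v := rfl
theorem kk_iota (v : Fin d → ℤ) : kk (ι d v) = 0 := rfl
theorem vec_tau (m : ℤ) : vec (τ d m) = 0 := rfl
theorem kk_tau (m : ℤ) : kk (τ d m) = m := rfl

theorem iota_add (v w : Fin d → ℤ) : ι d (v + w) = ι d v * ι d w := by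
  rw [ι, ofAdd_add, map_mul]; rfl

theorem iota_zero : ι d 0 = 1 := by rw [ι, ofAdd_zero, map_one]

theorem iota_neg (v : Fin d → ℤ) : ι d (-v) = (ι d v)⁻¹ := by
  rw [eq_inv_iff_mul_eq_one, ← iota_add]
  simp [iota_zero]

theorem tau_add (m m' : ℤ) : τ d (m + m') = τ d m * τ d m' := by
  rw [τ, ofAdd_add, map_mul]; rfl

theorem tau_zero : τ d 0 = 1 := by rw [τ, ofAdd_zero, map_one]

theorem tau_neg (m : ℤ) : τ d (-m) = (τ d m)⁻¹ := by
  rw [eq_inv_iff_mul_eq_one, ← tau_add]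
  simp [tau_zero]

theorem conj_iota (m : ℤ) (v : Fin d → ℤ) :
    τ d m * ι d v * τ d (-m) = ι d (Uop d (-m) v) := by
  have h2 : ι d (Uop d (-m) v) = SemidirectProduct.inl (act d (ofAdd m) (ofAdd v)) := by
    rw [act_apply]; rfl
  rw [h2, SemidirectProduct.inl_aut, tau_neg, τ, ι, map_inv]

theorem decomp (g : Gamma d) : g = ι d (vec g) * τ d (kk g) := by
  conv_lhs => rw [← SemidirectProduct.inl_left_mul_inr_right g]
  rfl

theorem ext_vec_kk {g h : Gamma d} (h1 : vec g = vec h) (h2 : kk g = kk h) : g = h := by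
  apply SemidirectProduct.ext
  · exact toAdd.injective h1
  · exact toAdd.injective h2

theorem vec_pow (h : Gamma d) (p : ℕ) :
    vec (h ^ p) = ∑ j ∈ Finset.range p, Uop d (-(j * kk h)) (vec h) ∧ kk (h ^ p) = p * kk h := by
  induction p with
  | zero =>
      constructor
      · show vec 1 = _
        simp [vec]
      · show kk 1 = _
        simp [kk]
  | succ p ih =>
      rw [pow_succ]
      constructor
      · rw [vec_mul, ih.1, ih.2, Finset.sum_range_succ]
        try push_cast
        try ring_nf
      · rw [kk_mul, ih.2]; push_cast; ring

theorem aeval_entry (p : Polynomial ℤ) (x : Fin d → ℤ) (j : Fin d) :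
    (Polynomial.aeval (shiftMap d) p) x j
      = ∑ r ∈ Finset.range ((j:ℕ)+1), p.coeff r *
          x ⟨(j:ℕ) - r, lt_of_le_of_lt (Nat.sub_le _ _) j.isLt⟩ := by
  set n := max (p.natDegree + 1) ((j:ℕ)+1) with hn
  have h1 : p.natDegree < n := lt_of_lt_of_le (Nat.lt_succ_self _) (le_max_left _ _)
  rw [Polynomial.aeval_eq_sum_range' h1]
  have h2 : ∀ i : ℕ, ((p.coeff i • shiftMap d ^ i) x) j
      = (if _h : i ≤ (j:ℕ) then
          p.coeff i * x ⟨(j:ℕ) - i, lt_of_le_of_lt (Nat.sub_le _ _) j.isLt⟩ else 0) := by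
    intro i
    rw [LinearMap.smul_apply, Pi.smul_apply, smul_eq_mul, shiftMap_pow_apply]
    by_cases h : i ≤ (j:ℕ)
    · rw [dif_pos h, dif_pos h]
    · rw [dif_neg h, dif_neg h, mul_zero]
  have h3 : ((∑ i ∈ Finset.range n, p.coeff i • shiftMap d ^ i) x) j
      = ∑ i ∈ Finset.range n, ((p.coeff i • shiftMap d ^ i) x) j := by
    rw [LinearMap.sum_apply, Finset.sum_apply]
  rw [h3]
  rw [Finset.sum_congr rfl fun i _ => h2 i]
  rw [← Finset.sum_subset (Finset.range_subset_range.2 (le_max_right (p.natDegree + 1) ((j:ℕ)+1)))]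
  · exact Finset.sum_congr rfl fun i hi => dif_pos (Nat.lt_succ_iff.mp (Finset.mem_range.mp hi))
  · intro i _ hi
    rw [dif_neg]
    intro h
    exact hi (Finset.mem_range.mpr (Nat.lt_succ_of_le h))

theorem sum_pow_le (c : ℤ) (hc : 1 ≤ c) (r : ℕ) :
    ∑ a ∈ Finset.range (r+1), c^a ≤ (c+1)^r := by
  induction r with
  | zero => simp
  | succ r ih =>
      rw [Finset.sum_range_succ]
      have h2 : c^(r+1) ≤ (c+1)^r * c := by
        have := pow_le_pow_left₀ (by linarith : (0:ℤ) ≤ c) (by linarith : c ≤ c + 1) r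
        calc c^(r+1) = c^r * c := by ring
          _ ≤ (c+1)^r * c := mul_le_mul_of_nonneg_right this (by linarith)
      calc ∑ a ∈ Finset.range (r+1), c^a + c^(r+1) ≤ (c+1)^r + (c+1)^r * c :=
            add_le_add ih h2
        _ = (c+1)^(r+1) := by ring

theorem coeff_mul_bound (p q : Polynomial ℤ) (b c : ℤ) (hb : 0 ≤ b) (hc : 0 ≤ c)
    (hp : ∀ r, |p.coeff r| ≤ b^r) (hq : ∀ r, |q.coeff r| ≤ c^r) :
    ∀ r, |(p*q).coeff r| ≤ (b+c)^r := by
  intro r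
  rw [Polynomial.coeff_mul]
  refine le_trans (Finset.abs_sum_le_sum_abs _ _) ?_
  rw [Finset.Nat.sum_antidiagonal_eq_sum_range_succ_mk]
  have h1 : ∀ a ∈ Finset.range (r+1), |p.coeff a * q.coeff (r - a)| ≤ b^a * c^(r-a) := by
    intro a _
    rw [abs_mul]
    exact mul_le_mul (hp a) (hq (r-a)) (abs_nonneg _) (pow_nonneg hb a)
  refine le_trans (Finset.sum_le_sum h1) ?_
  rw [add_pow]
  refine Finset.sum_le_sum fun a ha => ?_
  have h2 : (1:ℤ) ≤ (r.choose a : ℤ) := by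
    have := Nat.choose_pos (Nat.lt_succ_iff.mp (Finset.mem_range.mp ha))
    exact_mod_cast this
  nlinarith [pow_nonneg hb a, pow_nonneg hc (r-a), mul_nonneg (pow_nonneg hb a) (pow_nonneg hc (r-a))]

/-- Truncated geometric series `1 - X + X² - ⋯`, inverse of `1 + X` modulo `X^d`. -/
noncomputable def altP (d : ℕ) : Polynomial ℤ := ∑ r ∈ Finset.range d, (-Polynomial.X)^r

theorem neg_X_pow_eq (i : ℕ) :
    (-Polynomial.X : Polynomial ℤ)^i = Polynomial.C ((-1:ℤ)^i) * Polynomial.X^i := by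
  rw [neg_pow, map_pow, map_neg, map_one]

theorem altP_coeff (r : ℕ) : (altP d).coeff r = if r < d then (-1)^r else 0 := by
  rw [altP, Polynomial.finset_sum_coeff]
  have h : ∀ i ∈ Finset.range d, ((-Polynomial.X : Polynomial ℤ)^i).coeff r
      = if i = r then (-1)^r else 0 := by
    intro i _
    rw [neg_X_pow_eq, Polynomial.coeff_C_mul, Polynomial.coeff_X_pow]
    by_cases h : i = r
    · subst h; simp
    · simp only [if_neg h, if_neg (fun hh : r = i => h hh.symm), mul_zero]
  rw [Finset.sum_congr rfl h, Finset.sum_ite_eq' (Finset.range d) r fun _ => (-1)^r]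
  simp [Finset.mem_range]

theorem shiftMap_pow_d : (shiftMap d)^d = 0 := by
  apply LinearMap.ext; intro x; funext j
  rw [shiftMap_pow_apply, dif_neg (by omega)]; rfl

theorem aeval_altP : Polynomial.aeval (shiftMap d) (altP d) = Uop d (-1) := by
  have key : Polynomial.aeval (shiftMap d) (altP d) * (1 + shiftMap d) = 1 := by
    have h1 : (altP d) * (-Polynomial.X - 1) = (-Polynomial.X)^d - 1 := geom_sum_mul _ _
    have h2 := congrArg (Polynomial.aeval (shiftMap d)) h1
    simp only [map_mul, map_sub, map_pow, map_neg, map_one, Polynomial.aeval_X] at h2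
    have h3 : (-shiftMap d)^d = 0 := by
      rw [neg_pow, shiftMap_pow_d, mul_zero]
    rw [h3, zero_sub] at h2
    have e : (1 + shiftMap d : Module.End ℤ (Fin d → ℤ)) = -(-shiftMap d - 1) := by abel
    rw [e, mul_neg, h2, neg_neg]
  have u1 : ((phiUnit d : (Module.End ℤ (Fin d → ℤ))ˣ) : Module.End ℤ (Fin d → ℤ))
      = 1 + shiftMap d := phiUnit_val d
  have final : Polynomial.aeval (shiftMap d) (altP d)
      = (((phiUnit d)⁻¹ : (Module.End ℤ (Fin d → ℤ))ˣ) : Module.End ℤ (Fin d → ℤ)) := by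
    calc Polynomial.aeval (shiftMap d) (altP d)
        = Polynomial.aeval (shiftMap d) (altP d) *
          (((phiUnit d : (Module.End ℤ (Fin d → ℤ))ˣ) : Module.End ℤ (Fin d → ℤ)) *
           (((phiUnit d)⁻¹ : (Module.End ℤ (Fin d → ℤ))ˣ) : Module.End ℤ (Fin d → ℤ))) := by
          rw [Units.mul_inv, mul_one]
      _ = (Polynomial.aeval (shiftMap d) (altP d) *
          ((phiUnit d : (Module.End ℤ (Fin d → ℤ))ˣ) : Module.End ℤ (Fin d → ℤ))) *
           (((phiUnit d)⁻¹ : (Module.End ℤ (Fin d → ℤ))ˣ) : Module.End ℤ (Fin d → ℤ)) := by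
          rw [mul_assoc]
      _ = _ := by rw [u1, key, one_mul]
  rw [final, Uop, zpow_neg_one]

theorem one_add_X_coeff_bound (r : ℕ) :
    |(1 + Polynomial.X : Polynomial ℤ).coeff r| ≤ 1^r := by
  rw [Polynomial.coeff_add, Polynomial.coeff_one, Polynomial.coeff_X, one_pow]
  rcases r with _ | _ | r <;> simp

theorem altP_coeff_bound (r : ℕ) : |(altP d).coeff r| ≤ 1^r := by
  rw [altP_coeff, one_pow]
  by_cases h : r < d
  · rw [if_pos h, abs_pow, abs_neg, abs_one, one_pow]
  · rw [if_neg h]; norm_num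

theorem exists_poly (hd : 1 ≤ d) (m : ℤ) :
    ∃ p : Polynomial ℤ, Polynomial.aeval (shiftMap d) p = Uop d m ∧ p.coeff 0 = 1 ∧
      ∀ r, |p.coeff r| ≤ (|m| + 1)^r := by
  induction m using Int.induction_on with
  | zero =>
      refine ⟨1, ?_, ?_, ?_⟩
      · rw [map_one, Uop_zero]
      · simp
      · intro r; simp [Polynomial.coeff_one]
        by_cases h : r = 0 <;> simp [h]
  | succ k ih =>
      obtain ⟨p, hp1, hp2, hp3⟩ := ih
      refine ⟨p * (1 + Polynomial.X), ?_, ?_, ?_⟩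
      · rw [map_mul, hp1, map_add, map_one, Polynomial.aeval_X, ← Uop_one,
          ← Uop_add]
      · rw [Polynomial.mul_coeff_zero, hp2]
        simp
      · intro r
        have hb : (0:ℤ) ≤ |(k:ℤ)| + 1 := by positivity
        have := coeff_mul_bound p (1 + Polynomial.X) (|(k:ℤ)| + 1) 1 hb (by norm_num)
          hp3 one_add_X_coeff_bound r
        have habs : |(k:ℤ) + 1| + 1 = |(k:ℤ)| + 1 + 1 := by
          rw [abs_of_nonneg (by positivity : (0:ℤ) ≤ (k:ℤ) + 1),
            abs_of_nonneg (Int.ofNat_nonneg k)]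
        rw [habs]
        exact this
  | pred k ih =>
      obtain ⟨p, hp1, hp2, hp3⟩ := ih
      refine ⟨p * altP d, ?_, ?_, ?_⟩
      · rw [map_mul, hp1, aeval_altP, ← Uop_add, show -(k:ℤ) + -1 = -(k:ℤ) - 1 by ring]
      · rw [Polynomial.mul_coeff_zero, hp2, altP_coeff, if_pos (by omega), pow_zero, one_mul]
      · intro r
        have hb : (0:ℤ) ≤ |(-(k:ℤ))| + 1 := by positivity
        have := coeff_mul_bound p (altP d) (|(-(k:ℤ))| + 1) 1 hb (by norm_num)
          hp3 altP_coeff_bound r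
        have habs : |(-(k:ℤ) - 1)| + 1 = |(-(k:ℤ))| + 1 + 1 := by
          rw [abs_of_nonpos (by omega : -(k:ℤ) - 1 ≤ 0), abs_of_nonpos (by omega : -(k:ℤ) ≤ 0)]
          ring
        rw [habs]
        exact this

/-- `g` is a product of at most `ℓ` generators or inverses. -/
noncomputable def R (d : ℕ) (g : Gamma d) (ℓ : ℕ) : Prop :=
  ∃ l : List (Gamma d), l.length ≤ ℓ ∧ (∀ x ∈ l, x ∈ gens d ∨ x⁻¹ ∈ gens d) ∧ l.prod = g

theorem R_mono {g : Gamma d} {ℓ ℓ' : ℕ} (h : R d g ℓ) (hle : ℓ ≤ ℓ') : R d g ℓ' := by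
  obtain ⟨l, h1, h2, h3⟩ := h
  exact ⟨l, le_trans h1 hle, h2, h3⟩

theorem R_one : R d 1 0 := ⟨[], by simp, by simp, rfl⟩

theorem R_mul {g h : Gamma d} {ℓ ℓ' : ℕ} (hg : R d g ℓ) (hh : R d h ℓ') :
    R d (g * h) (ℓ + ℓ') := by
  obtain ⟨l, h1, h2, h3⟩ := hg
  obtain ⟨l', h1', h2', h3'⟩ := hh
  refine ⟨l ++ l', ?_, ?_, ?_⟩
  · rw [List.length_append]; omega
  · intro x hx
    rcases List.mem_append.mp hx with h | h
    · exact h2 x h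
    · exact h2' x h
  · rw [List.prod_append, h3, h3']

theorem wl_le_of_R {g : Gamma d} {ℓ : ℕ} (h : R d g ℓ) : wl d g ≤ ℓ := by
  obtain ⟨l, h1, h2, h3⟩ := h
  exact le_trans (Nat.sInf_le ⟨l, rfl, h2, h3⟩) h1

theorem R_of_gen {s : Gamma d} (hs : s ∈ gens d ∨ s⁻¹ ∈ gens d) : R d s 1 :=
  ⟨[s], by simp, by simpa using hs, by simp⟩

theorem tGen_eq : tGen d = τ d 1 := rfl
theorem aGen_eq (i : Fin d) : aGen d i = ι d (Pi.single i 1) := rfl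

theorem R_tau (m : ℤ) : R d (τ d m) m.natAbs := by
  induction m using Int.induction_on with
  | zero => rw [tau_zero]; exact R_one
  | succ k ih =>
      rw [tau_add]
      have h1 : R d (τ d 1) 1 := R_of_gen (Or.inl (Or.inl tGen_eq.symm))
      refine R_mono (R_mul ih h1) (by omega)
  | pred k ih =>
      rw [show -(k:ℤ) - 1 = -(k:ℤ) + -1 by ring, tau_add]
      have h1 : R d (τ d (-1)) 1 := by
        refine R_of_gen (Or.inr ?_)
        rw [show ((-1:ℤ)) = -(1:ℤ) by ring, tau_neg, inv_inv]
        exact Or.inl tGen_eq.symm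
      refine R_mono (R_mul ih h1) (by omega)

theorem R_single (i : Fin d) (c : ℤ) : R d (ι d (Pi.single i c)) c.natAbs := by
  induction c using Int.induction_on with
  | zero => rw [Pi.single_zero, iota_zero]; exact R_one
  | succ k ih =>
      have e : (Pi.single i ((k:ℤ)+1) : Fin d → ℤ) = Pi.single i (k:ℤ) + Pi.single i 1 := by
        rw [← Pi.single_add]
      rw [e, iota_add]
      have h1 : R d (ι d (Pi.single i 1)) 1 :=
        R_of_gen (Or.inl (Or.inr ⟨i, rfl⟩))
      refine R_mono (R_mul ih h1) (by omega)
  | pred k ih =>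
      have e : (Pi.single i (-(k:ℤ)-1) : Fin d → ℤ)
          = Pi.single i (-(k:ℤ)) + Pi.single i (-1) := by
        rw [← Pi.single_add]; ring_nf
      rw [e, iota_add]
      have h1 : R d (ι d (Pi.single i (-1))) 1 := by
        refine R_of_gen (Or.inr ?_)
        have e2 : (Pi.single i (-1:ℤ) : Fin d → ℤ) = -Pi.single i 1 := by
          rw [Pi.single_neg]
        rw [e2, iota_neg, inv_inv]
        exact Set.mem_insert_iff.mpr (Or.inr ⟨i, rfl⟩)
      refine R_mono (R_mul ih h1) (by omega)

theorem gens_cases {s : Gamma d} (hs : s ∈ gens d ∨ s⁻¹ ∈ gens d) :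
    (s = τ d 1 ∨ s = τ d (-1)) ∨
      (∃ (i : Fin d) (e : ℤ), (e = 1 ∨ e = -1) ∧ s = ι d (Pi.single i e)) := by
  rcases hs with h | h
  · rcases h with h | ⟨i, hi⟩
    · exact Or.inl (Or.inl h)
    · exact Or.inr ⟨i, 1, Or.inl rfl, hi.symm⟩
  · rcases h with h | ⟨i, hi⟩
    · refine Or.inl (Or.inr ?_)
      have : s = (tGen d)⁻¹ := by rw [← h, inv_inv]
      rw [this, tGen_eq, ← tau_neg]
    · refine Or.inr ⟨i, -1, Or.inr rfl, ?_⟩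
      have : s = (aGen d i)⁻¹ := by rw [hi, inv_inv]
      rw [this, aGen_eq, ← iota_neg, Pi.single_neg]

theorem Uop_entry_bound (hd : 1 ≤ d) (m : ℤ) (w : Fin d → ℤ) (hw : ∀ i, |w i| ≤ 1)
    (j : Fin d) : |Uop d m w j| ≤ (|m| + 2)^(j:ℕ) := by
  obtain ⟨p, hp1, hp2, hp3⟩ := exists_poly hd m
  rw [← hp1, aeval_entry]
  refine le_trans (Finset.abs_sum_le_sum_abs _ _) ?_
  have h1 : ∀ r ∈ Finset.range ((j:ℕ)+1),
      |p.coeff r * w ⟨(j:ℕ) - r, lt_of_le_of_lt (Nat.sub_le _ _) j.isLt⟩| ≤ (|m|+1)^r := by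
    intro r _
    rw [abs_mul]
    calc |p.coeff r| * |w _| ≤ (|m|+1)^r * 1 :=
          mul_le_mul (hp3 r) (hw _) (abs_nonneg _) (by positivity)
      _ = (|m|+1)^r := mul_one _
  refine le_trans (Finset.sum_le_sum h1) ?_
  have := sum_pow_le (|m|+1) (by have := abs_nonneg m; linarith) (j:ℕ)
  calc ∑ a ∈ Finset.range ((j:ℕ)+1), (|m|+1)^a ≤ (|m|+1+1)^(j:ℕ) := this
    _ = (|m|+2)^(j:ℕ) := by ring_nf

theorem word_bound (hd : 1 ≤ d) (l : List (Gamma d))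
    (hl : ∀ x ∈ l, x ∈ gens d ∨ x⁻¹ ∈ gens d) :
    |kk l.prod| ≤ (l.length : ℤ) ∧
      ∀ j : Fin d, |vec l.prod j| ≤ (l.length : ℤ) * ((l.length : ℤ) + 2)^(j:ℕ) := by
  induction l using List.reverseRecOn with
  | nil =>
      constructor
      · show |kk 1| ≤ _
        simp [kk]
      · intro j
        show |vec 1 j| ≤ _
        simp [vec]
  | append_singleton l s ih =>
      have hl' : ∀ x ∈ l, x ∈ gens d ∨ x⁻¹ ∈ gens d := fun x hx => hl x (by simp [hx])
      have hs : s ∈ gens d ∨ s⁻¹ ∈ gens d := hl s (by simp)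
      obtain ⟨ih1, ih2⟩ := ih hl'
      rw [List.prod_append, List.prod_cons, List.prod_nil, mul_one]
      rw [List.length_append, List.length_cons, List.length_nil]
      push_cast
      set L : ℤ := (l.length : ℤ) with hL
      have hL0 : 0 ≤ L := by positivity
      rcases gens_cases hs with (h | h) | ⟨i, e, he, h⟩
      all_goals subst h
      · rw [kk_mul, vec_mul, kk_tau, vec_tau, map_zero, add_zero]
        constructor
        · calc |kk l.prod + 1| ≤ |kk l.prod| + 1 := abs_add_le _ _
            _ ≤ L + 1 := by linarith
        · intro j
          calc |vec l.prod j| ≤ L * (L+2)^(j:ℕ) := ih2 j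
            _ ≤ (L+1) * (L+1+2)^(j:ℕ) := by
                have := pow_le_pow_left₀ (by linarith : (0:ℤ) ≤ L+2) (by linarith : L+2 ≤ L+1+2) (j:ℕ)
                have h2 : (0:ℤ) ≤ (L+2)^(j:ℕ) := by positivity
                nlinarith
      · rw [kk_mul, vec_mul, kk_tau, vec_tau, map_zero, add_zero]
        constructor
        · calc |kk l.prod + (-1)| ≤ |kk l.prod| + |(-1:ℤ)| := abs_add_le _ _
            _ ≤ L + 1 := by rw [abs_neg, abs_one]; linarith
        · intro j
          calc |vec l.prod j| ≤ L * (L+2)^(j:ℕ) := ih2 j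
            _ ≤ (L+1) * (L+1+2)^(j:ℕ) := by
                have := pow_le_pow_left₀ (by linarith : (0:ℤ) ≤ L+2) (by linarith : L+2 ≤ L+1+2) (j:ℕ)
                have h2 : (0:ℤ) ≤ (L+2)^(j:ℕ) := by positivity
                nlinarith
      · rw [kk_mul, vec_mul, kk_iota, vec_iota, add_zero]
        constructor
        · linarith
        · intro j
          have hw : ∀ i' : Fin d, |(Pi.single i e : Fin d → ℤ) i'| ≤ 1 := by
            intro i'
            by_cases hii : i' = i
            · subst hii
              rw [Pi.single_eq_same]
              rcases he with he | he <;> subst he <;> norm_num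
            · rw [Pi.single_eq_of_ne hii]; norm_num
          have hb := Uop_entry_bound hd (-(kk l.prod)) (Pi.single i e) hw j
          have hkk : |(-(kk l.prod))| ≤ L := by rw [abs_neg]; exact ih1
          have hb2 : |Uop d (-(kk l.prod)) (Pi.single i e) j| ≤ (L + 2)^(j:ℕ) := by
            refine le_trans hb (pow_le_pow_left₀ ?_ (by linarith) _)
            positivity
          calc |vec l.prod j + Uop d (-(kk l.prod)) (Pi.single i e) j|
              ≤ |vec l.prod j| + |Uop d (-(kk l.prod)) (Pi.single i e) j| := abs_add_le _ _
            _ ≤ L * (L+2)^(j:ℕ) + (L+2)^(j:ℕ) := add_le_add (ih2 j) hb2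
            _ = (L+1) * (L+2)^(j:ℕ) := by ring
            _ ≤ (L+1) * (L+1+2)^(j:ℕ) := by
                have := pow_le_pow_left₀ (by linarith : (0:ℤ) ≤ L+2) (by linarith : L+2 ≤ L+1+2) (j:ℕ)
                nlinarith

theorem exists_S (hd : 1 ≤ d) (p : ℕ) (k : ℤ) :
    ∃ S : Polynomial ℤ,
      Polynomial.aeval (shiftMap d) S = ∑ j ∈ Finset.range p, Uop d (-((j:ℤ) * k)) ∧
      S.coeff 0 = p ∧ ∀ r, |S.coeff r| ≤ p * (|(p:ℤ) * k| + 1)^r := by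
  choose f hf1 hf2 hf3 using fun j : ℤ => exists_poly hd (-(j * k))
  refine ⟨∑ j ∈ Finset.range p, f j, ?_, ?_, ?_⟩
  · rw [map_sum]
    exact Finset.sum_congr rfl fun j _ => hf1 j
  · rw [Polynomial.finset_sum_coeff]
    rw [show ∑ b ∈ Finset.range p, (f (b:ℤ)).coeff 0 = ∑ _b ∈ Finset.range p, (1:ℤ) from
      Finset.sum_congr rfl fun j _ => hf2 _]
    simp
  · intro r
    rw [Polynomial.finset_sum_coeff]
    refine le_trans (Finset.abs_sum_le_sum_abs _ _) ?_
    have hterm : ∀ j ∈ Finset.range p, |(f j).coeff r| ≤ (|(p:ℤ) * k| + 1)^r := by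
      intro j hj
      refine le_trans (hf3 (j:ℤ) r) (pow_le_pow_left₀ (by positivity) ?_ r)
      have h1 : |(-((j:ℤ) * k))| = (j:ℤ) * |k| := by
        rw [abs_neg, abs_mul, Int.abs_natCast]
      have h2 : |(p:ℤ) * k| = (p:ℤ) * |k| := by
        rw [abs_mul, Int.abs_natCast]
      rw [h1, h2]
      have : (j:ℤ) ≤ (p:ℤ) := by exact_mod_cast le_of_lt (Finset.mem_range.mp hj)
      nlinarith [abs_nonneg k]
    refine le_trans (Finset.sum_le_sum hterm) ?_
    rw [Finset.sum_const, Finset.card_range, nsmul_eq_mul]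

theorem one_add_geom4 : ∀ j : ℕ, 1 + ∑ s ∈ Finset.range j, (4:ℤ)^s ≤ 4^j := by
  intro j
  induction j with
  | zero => simp
  | succ j ih =>
      rw [Finset.sum_range_succ]
      have h4 : (0:ℤ) < 4^j := by positivity
      calc 1 + (∑ s ∈ Finset.range j, (4:ℤ)^s + 4^j)
          = (1 + ∑ s ∈ Finset.range j, (4:ℤ)^s) + 4^j := by ring
        _ ≤ 4^j + 4^j := add_le_add ih le_rfl
        _ ≤ 4^(j+1) := by rw [pow_succ]; linarith

theorem root_coord_bound (hd : 1 ≤ d) {p : ℕ} (hp : 1 ≤ p) {S : Polynomial ℤ} {Q : ℤ}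
    (hQ : 1 ≤ Q) (hS0 : S.coeff 0 = p) (hSr : ∀ r, |S.coeff r| ≤ p * Q^r)
    {x y : Fin d → ℤ} (hy : ∀ j : Fin d, |y j| ≤ Q^((j:ℕ)+1))
    (heq : Polynomial.aeval (shiftMap d) S x = y) :
    ∀ j : Fin d, |x j| ≤ 4^(j:ℕ) * Q^((j:ℕ)+1) := by
  have key : ∀ j : Fin d, (∀ j' : Fin d, (j':ℕ) < (j:ℕ) → |x j'| ≤ 4^(j':ℕ) * Q^((j':ℕ)+1)) →
      |x j| ≤ 4^(j:ℕ) * Q^((j:ℕ)+1) := by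
    intro j ihj
    have e1 := congrFun heq j
    rw [aeval_entry, Finset.sum_range_succ'] at e1
    have eidx : (⟨(j:ℕ) - 0, lt_of_le_of_lt (Nat.sub_le _ _) j.isLt⟩ : Fin d) = j := by
      apply Fin.ext; simp
    rw [eidx, hS0] at e1
    -- e1 : ∑ r ∈ range j, S.coeff (r+1) * x ⟨j-(r+1)⟩ + p * x j = y j
    have e2 : (p:ℤ) * x j
        = y j - ∑ r ∈ Finset.range (j:ℕ), S.coeff (r+1) *
            x ⟨(j:ℕ) - (r+1), lt_of_le_of_lt (Nat.sub_le _ _) j.isLt⟩ := by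
      rw [← e1]; ring
    have hsum : |∑ r ∈ Finset.range (j:ℕ), S.coeff (r+1) *
        x ⟨(j:ℕ) - (r+1), lt_of_le_of_lt (Nat.sub_le _ _) j.isLt⟩|
        ≤ (p:ℤ) * Q^((j:ℕ)+1) * ∑ s ∈ Finset.range (j:ℕ), (4:ℤ)^s := by
      refine le_trans (Finset.abs_sum_le_sum_abs _ _) ?_
      have hterm : ∀ r ∈ Finset.range (j:ℕ), |S.coeff (r+1) *
          x ⟨(j:ℕ) - (r+1), lt_of_le_of_lt (Nat.sub_le _ _) j.isLt⟩|
          ≤ ((p:ℤ) * Q^((j:ℕ)+1)) * 4^((j:ℕ)-1-r) := by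
        intro r hr
        have hr' : r < (j:ℕ) := Finset.mem_range.mp hr
        set j' : Fin d := ⟨(j:ℕ) - (r+1), lt_of_le_of_lt (Nat.sub_le _ _) j.isLt⟩ with hj'
        have hj'v : (j':ℕ) = (j:ℕ) - (r+1) := rfl
        have hx' : |x j'| ≤ 4^((j':ℕ)) * Q^((j':ℕ)+1) := ihj j' (by omega)
        rw [abs_mul]
        have h1 : |S.coeff (r+1)| ≤ (p:ℤ) * Q^(r+1) := hSr (r+1)
        have hQp : (0:ℤ) < Q^(r+1) := by positivity
        have h2 : (0:ℤ) ≤ |x j'| := abs_nonneg _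
        have h3 := mul_le_mul h1 hx' h2 (by positivity)
        refine le_trans h3 (le_of_eq ?_)
        have hpow : Q^(r+1) * (4^((j':ℕ)) * Q^((j':ℕ)+1)) = 4^((j':ℕ)) * Q^((j:ℕ)+1) := by
          rw [hj'v]
          have : (r+1) + (((j:ℕ) - (r+1)) + 1) = (j:ℕ)+1 := by omega
          calc Q^(r+1) * (4^((j:ℕ)-(r+1)) * Q^(((j:ℕ)-(r+1))+1))
              = 4^((j:ℕ)-(r+1)) * (Q^(r+1) * Q^(((j:ℕ)-(r+1))+1)) := by ring
            _ = 4^((j:ℕ)-(r+1)) * Q^((j:ℕ)+1) := by rw [← pow_add, this]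
        have hidx : (j:ℕ) - (r+1) = (j:ℕ) - 1 - r := by omega
        calc (p:ℤ) * Q^(r+1) * (4^((j':ℕ)) * Q^((j':ℕ)+1))
            = (p:ℤ) * (Q^(r+1) * (4^((j':ℕ)) * Q^((j':ℕ)+1))) := by ring
          _ = (p:ℤ) * (4^((j':ℕ)) * Q^((j:ℕ)+1)) := by rw [hpow]
          _ = ((p:ℤ) * Q^((j:ℕ)+1)) * 4^((j':ℕ)) := by ring
          _ = ((p:ℤ) * Q^((j:ℕ)+1)) * 4^((j:ℕ)-1-r) := by rw [hj'v, hidx]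
      refine le_trans (Finset.sum_le_sum hterm) ?_
      rw [← Finset.mul_sum]
      have hrefl : ∑ r ∈ Finset.range (j:ℕ), (4:ℤ)^((j:ℕ)-1-r)
          = ∑ s ∈ Finset.range (j:ℕ), (4:ℤ)^s := Finset.sum_range_reflect (fun s => (4:ℤ)^s) _
      rw [hrefl]
  -- now combine
    have hyj := hy j
    have habs : (p:ℤ) * |x j| ≤ (p:ℤ) * (4^(j:ℕ) * Q^((j:ℕ)+1)) := by
      have hgeom := one_add_geom4 (j:ℕ)
      have hQpos : (0:ℤ) < Q^((j:ℕ)+1) := by positivity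
      have hp1 : (1:ℤ) ≤ (p:ℤ) := by exact_mod_cast hp
      calc (p:ℤ) * |x j| = |(p:ℤ) * x j| := by
            rw [abs_mul, abs_of_nonneg (by positivity : (0:ℤ) ≤ (p:ℤ))]
        _ = |y j - ∑ r ∈ Finset.range (j:ℕ), S.coeff (r+1) *
              x ⟨(j:ℕ) - (r+1), lt_of_le_of_lt (Nat.sub_le _ _) j.isLt⟩| := by rw [e2]
        _ ≤ |y j| + |∑ r ∈ Finset.range (j:ℕ), S.coeff (r+1) *
              x ⟨(j:ℕ) - (r+1), lt_of_le_of_lt (Nat.sub_le _ _) j.isLt⟩| := abs_sub _ _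
        _ ≤ Q^((j:ℕ)+1) + (p:ℤ) * Q^((j:ℕ)+1) * ∑ s ∈ Finset.range (j:ℕ), (4:ℤ)^s :=
              add_le_add hyj hsum
        _ ≤ (p:ℤ) * Q^((j:ℕ)+1) * (1 + ∑ s ∈ Finset.range (j:ℕ), (4:ℤ)^s) := by
              have hsum4 : (0:ℤ) ≤ ∑ s ∈ Finset.range (j:ℕ), (4:ℤ)^s :=
                Finset.sum_nonneg fun s _ => by positivity
              nlinarith
        _ ≤ (p:ℤ) * Q^((j:ℕ)+1) * 4^(j:ℕ) := by
              have : (0:ℤ) ≤ (p:ℤ) * Q^((j:ℕ)+1) := by positivity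
              nlinarith
        _ = (p:ℤ) * (4^(j:ℕ) * Q^((j:ℕ)+1)) := by ring
    have hppos : (0:ℤ) < (p:ℤ) := by exact_mod_cast hp
    exact le_of_mul_le_mul_left habs hppos
  -- strong induction
  have main : ∀ n : ℕ, ∀ j : Fin d, (j:ℕ) ≤ n → |x j| ≤ 4^(j:ℕ) * Q^((j:ℕ)+1) := by
    intro n
    induction n with
    | zero =>
        intro j hj
        exact key j fun j' hj' => absurd hj' (by omega)
    | succ n ih =>
        intro j hj
        by_cases hj2 : (j:ℕ) ≤ n
        · exact ih j hj2
        · exact key j fun j' hj' => ih j' (by omega)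
  exact fun j => main (j:ℕ) j le_rfl

theorem R_inv {g : Gamma d} {ℓ : ℕ} (h : R d g ℓ) : R d g⁻¹ ℓ := by
  obtain ⟨l, h1, h2, h3⟩ := h
  refine ⟨(l.map fun x => x⁻¹).reverse, ?_, ?_, ?_⟩
  · simpa using h1
  · intro x hx
    rw [List.mem_reverse, List.mem_map] at hx
    obtain ⟨y, hy, rfl⟩ := hx
    rcases h2 y hy with h | h
    · exact Or.inr (by simpa using h)
    · exact Or.inl h
  · rw [← List.prod_inv_reverse, h3]

theorem R_iota_conj {v : Fin d → ℤ} {ℓ : ℕ} (h : R d (ι d v) ℓ) (m : ℤ) :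
    R d (ι d (Uop d m v)) (ℓ + 2 * m.natAbs) := by
  have e : ι d (Uop d m v) = τ d (-m) * ι d v * τ d m := by
    have := conj_iota (-m) v
    rw [neg_neg] at this
    rw [← this]
  rw [e]
  have := R_mul (R_mul (R_tau (d := d) (-m)) h) (R_tau (d := d) m)
  refine R_mono this ?_
  rw [Int.natAbs_neg]
  omega

theorem R_iota_comm {v : Fin d → ℤ} {ℓ : ℕ} (h : R d (ι d v) ℓ) (m : ℤ) :
    R d (ι d ((Uop d m - 1) v)) (2 * ℓ + 2 * m.natAbs) := by
  have e : (Uop d m - 1) v = -v + Uop d m v := by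
    rw [LinearMap.sub_apply, Module.End.one_apply]; ring
  rw [e, iota_add, iota_neg]
  have := R_mul (R_inv h) (R_iota_conj h m)
  refine R_mono this (by omega)

theorem R_iota_comm_iter {v : Fin d → ℤ} {ℓ : ℕ} (h : R d (ι d v) ℓ) (m : ℤ) (u : ℕ) :
    R d (ι d (((Uop d m - 1)^u) v)) (2^u * ℓ + (2^u - 1) * (2 * m.natAbs)) := by
  induction u with
  | zero => simpa using h
  | succ u ih =>
      have e : ((Uop d m - 1)^(u+1)) v = (Uop d m - 1) (((Uop d m - 1)^u) v) := by
        rw [pow_succ']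
        rfl
      rw [e]
      have := R_iota_comm ih m
      refine R_mono this ?_
      have h2 : (1:ℕ) ≤ 2^u := Nat.one_le_two_pow
      set a := 2^u with ha
      set b := 2 * m.natAbs with hb
      have e0 : (2:ℕ)^(u+1) = 2 * a := by rw [pow_succ]; ring
      rw [e0]
      have e1 : (a - 1) * b = a * b - b := by rw [Nat.sub_mul, one_mul]
      have e2 : (2 * a - 1) * b = 2 * (a * b) - b := by
        rw [Nat.sub_mul, one_mul]; ring_nf
      have e3 : 2 * a * ℓ = 2 * (a * ℓ) := by ring
      have e4 : b ≤ a * b := Nat.le_mul_of_pos_left b (by omega)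
      omega

theorem digits (q : ℕ) (hq : 1 ≤ q) : ∀ (j : ℕ) (B : ℤ), 1 ≤ B → ∀ v : ℤ,
    |v| ≤ B * (q:ℤ)^(j+1) →
    ∃ s : ℕ → ℤ, v = (∑ u ∈ Finset.range (j+1), s u * (q:ℤ)^u) ∧
      ∀ u, |s u| ≤ (B + 2) * q := by
  intro j
  induction j with
  | zero =>
      intro B hB v hv
      refine ⟨fun _ => v, ?_, ?_⟩
      · simp
      · intro u
        refine le_trans (by simpa using hv) ?_
        have hq' : (1:ℤ) ≤ (q:ℤ) := by exact_mod_cast hq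
        nlinarith
  | succ j ih =>
      intro B hB v hv
      set M : ℤ := (q:ℤ)^(j+1) with hM
      have hM0 : (0:ℤ) < M := by positivity
      set t : ℤ := v / M with ht
      set r : ℤ := v % M with hr
      have hdm : M * t + r = v := Int.mul_ediv_add_emod v M
      have hr0 : 0 ≤ r := Int.emod_nonneg v (by omega)
      have hrM : r < M := Int.emod_lt_of_pos v hM0
      have htb : |t| ≤ B * q + 1 := by
        have h1 : M * |t| = |M * t| := by
          rw [abs_mul, abs_of_pos hM0]
        have h2 : |M * t| ≤ |v| + |r| := by
          have : M * t = v - r := by omega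
          rw [this]
          exact abs_sub _ _
        have h3 : |r| ≤ M := by rw [abs_of_nonneg hr0]; omega
        have h4 : M * |t| ≤ B * (q:ℤ)^(j+2) + M := by
          rw [h1]
          refine le_trans h2 ?_
          exact add_le_add hv h3
        have h5 : B * (q:ℤ)^(j+2) + M = M * (B * q + 1) := by
          rw [hM]; ring
        rw [h5] at h4
        exact le_of_mul_le_mul_left h4 hM0
      obtain ⟨s', hs'1, hs'2⟩ := ih 1 le_rfl r (by rw [abs_of_nonneg hr0]; simpa using le_of_lt hrM)
      refine ⟨Function.update s' (j+1) t, ?_, ?_⟩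
      · rw [Finset.sum_range_succ, Function.update_self]
        have huu : ∀ u ∈ Finset.range (j+1),
            (Function.update s' (j+1) t) u * (q:ℤ)^u = s' u * (q:ℤ)^u := by
          intro u hu
          rw [Function.update_of_ne (by have := Finset.mem_range.mp hu; omega)]
        rw [Finset.sum_congr rfl huu, ← hs'1]
        have ecomm : t * (q:ℤ)^(j+1) = M * t := by rw [hM]; ring
        omega
      · intro u
        by_cases hu : u = j+1
        · subst hu
          rw [Function.update_self]
          have hq' : (1:ℤ) ≤ (q:ℤ) := by exact_mod_cast hq
          nlinarith
        · rw [Function.update_of_ne hu]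
          have := hs'2 u
          have hq' : (1:ℤ) ≤ (q:ℤ) := by exact_mod_cast hq
          nlinarith

/-- The gadget polynomial `(1+X)^q - 1`. -/
noncomputable def mq (q : ℕ) : Polynomial ℤ := (1 + Polynomial.X)^q - 1

theorem Uop_natCast (q : ℕ) :
    Uop d (q:ℤ) = Polynomial.aeval (shiftMap d) ((1 + Polynomial.X : Polynomial ℤ)^q) := by
  induction q with
  | zero => rw [pow_zero, map_one, Int.natCast_zero, Uop_zero]
  | succ q ih =>
      have e : ((q+1 : ℕ) : ℤ) = (q:ℤ) + 1 := by push_cast; ring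
      rw [e, Uop_add, ih, pow_succ, map_mul, Uop_one, map_add, map_one, Polynomial.aeval_X]

theorem aeval_mq_pow (q u : ℕ) :
    Polynomial.aeval (shiftMap d) (mq q ^ u) = (Uop d (q:ℤ) - 1)^u := by
  rw [map_pow, mq, map_sub, map_one, Uop_natCast]

theorem mq_coeff_zero (q : ℕ) : (mq q).coeff 0 = 0 := by
  rw [mq, Polynomial.coeff_sub, Polynomial.coeff_one_add_X_pow, Polynomial.coeff_one]
  simp

theorem mq_coeff_one (q : ℕ) : (mq q).coeff 1 = q := by
  rw [mq, Polynomial.coeff_sub, Polynomial.coeff_one_add_X_pow, Polynomial.coeff_one]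
  simp

theorem mq_coeff_bound (q : ℕ) (r : ℕ) : |(mq q).coeff r| ≤ (q:ℤ)^r := by
  rcases r with _ | r
  · rw [mq_coeff_zero]; simp
  · rw [mq, Polynomial.coeff_sub, Polynomial.coeff_one_add_X_pow, Polynomial.coeff_one,
      if_neg (by omega), sub_zero]
    have := Nat.choose_le_pow q (r+1)
    rw [abs_of_nonneg (by positivity : (0:ℤ) ≤ (q.choose (r+1) : ℤ))]
    exact_mod_cast this

theorem coeff_pow_bound (p : Polynomial ℤ) (c : ℤ) (hc : 0 ≤ c)
    (hp : ∀ r, |p.coeff r| ≤ c^r) : ∀ (u r : ℕ), |(p^u).coeff r| ≤ ((u:ℤ)*c)^r := by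
  intro u
  induction u with
  | zero =>
      intro r
      rw [pow_zero]
      rcases r with _ | r
      · simp
      · rw [Polynomial.coeff_one, if_neg (by omega)]
        simp
  | succ u ih =>
      intro r
      rw [pow_succ]
      have := coeff_mul_bound (p^u) p ((u:ℤ)*c) c (by positivity) hc ih hp r
      refine le_trans this (le_of_eq ?_)
      push_cast
      ring_nf

theorem pow_low_coeff (p : Polynomial ℤ) (hp0 : p.coeff 0 = 0) (u : ℕ) :
    (∀ r, r < u → (p^u).coeff r = 0) ∧ (p^u).coeff u = (p.coeff 1)^u := by
  obtain ⟨g, hg⟩ := Polynomial.X_dvd_iff.mpr hp0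
  have hpc1 : g.coeff 0 = p.coeff 1 := by rw [hg, Polynomial.coeff_X_mul]
  have hpu : p^u = g^u * Polynomial.X^u := by rw [hg]; ring
  constructor
  · intro r hr
    rw [hpu, Polynomial.coeff_mul_X_pow', if_neg (by omega)]
  · rw [hpu, Polynomial.coeff_mul_X_pow', if_pos le_rfl, Nat.sub_self,
      Polynomial.coeff_zero_eq_eval_zero, Polynomial.eval_pow,
      ← Polynomial.coeff_zero_eq_eval_zero, hpc1]

theorem aeval_single_entry (p : Polynomial ℤ) (b : Fin d) (s : ℤ) (j : Fin d) :
    Polynomial.aeval (shiftMap d) p (Pi.single b s) j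
      = if (b:ℕ) ≤ (j:ℕ) then p.coeff ((j:ℕ) - (b:ℕ)) * s else 0 := by
  rw [aeval_entry]
  have hterm : ∀ r ∈ Finset.range ((j:ℕ)+1),
      p.coeff r * (Pi.single b s : Fin d → ℤ)
        ⟨(j:ℕ)-r, lt_of_le_of_lt (Nat.sub_le _ _) j.isLt⟩
      = if r = (j:ℕ)-(b:ℕ) ∧ (b:ℕ) ≤ (j:ℕ) then p.coeff r * s else 0 := by
    intro r hr
    have hr' : r ≤ (j:ℕ) := by
      have := Finset.mem_range.mp hr; omega
    rw [Pi.single_apply]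
    have heq : ((⟨(j:ℕ)-r, lt_of_le_of_lt (Nat.sub_le _ _) j.isLt⟩ : Fin d) = b)
        ↔ ((j:ℕ) - r = (b:ℕ)) := by
      rw [Fin.ext_iff]
    by_cases hc : (j:ℕ) - r = (b:ℕ)
    · rw [if_pos (heq.mpr hc), if_pos (by omega)]
    · rw [if_neg (fun hh => hc (heq.mp hh)), if_neg (by omega), mul_zero]
  rw [Finset.sum_congr rfl hterm]
  by_cases hb : (b:ℕ) ≤ (j:ℕ)
  · have e1 : ∀ r ∈ Finset.range ((j:ℕ)+1),
        (if r = (j:ℕ)-(b:ℕ) ∧ (b:ℕ) ≤ (j:ℕ) then p.coeff r * s else 0)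
        = if r = (j:ℕ)-(b:ℕ) then p.coeff r * s else 0 := by
      intro r _
      by_cases hc : r = (j:ℕ)-(b:ℕ)
      · rw [if_pos ⟨hc, hb⟩, if_pos hc]
      · rw [if_neg (fun hh => hc hh.1), if_neg hc]
    rw [Finset.sum_congr rfl e1, Finset.sum_ite_eq' (Finset.range ((j:ℕ)+1)) _
      (fun r => p.coeff r * s), if_pos (Finset.mem_range.mpr (by omega)), if_pos hb]
  · have e1 : ∀ r ∈ Finset.range ((j:ℕ)+1),
        (if r = (j:ℕ)-(b:ℕ) ∧ (b:ℕ) ≤ (j:ℕ) then p.coeff r * s else 0) = 0 := by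
      intro r _
      rw [if_neg (fun hh => hb hh.2)]
    rw [Finset.sum_congr rfl e1, Finset.sum_const, smul_zero, if_neg hb]

theorem R_iota_sum (F : ℕ → (Fin d → ℤ)) (B : ℕ) (n : ℕ)
    (h : ∀ u, u < n → R d (ι d (F u)) B) :
    R d (ι d (∑ u ∈ Finset.range n, F u)) (n * B) := by
  induction n with
  | zero => simpa [iota_zero] using R_one
  | succ n ih =>
      rw [Finset.sum_range_succ, iota_add]
      have h1 := R_mul (ih fun u hu => h u (by omega)) (h n (by omega))
      refine R_mono h1 (by ring_nf; omega)

theorem R_gadget (q : ℕ) (b : Fin d) (s : ℤ) (u : ℕ) :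
    R d (ι d (Polynomial.aeval (shiftMap d) (mq q ^ u) (Pi.single b s)))
      (2^u * s.natAbs + (2^u - 1) * (2 * q)) := by
  have h1 := R_iota_comm_iter (R_single b s) (q:ℤ) u
  rw [Int.natAbs_natCast] at h1
  rw [aeval_mq_pow]
  exact h1

theorem build (hd : 1 ≤ d) : ∀ (g C : ℕ), 1 ≤ C → ∃ L : ℕ, ∀ (q : ℕ), 1 ≤ q →
    ∀ x : Fin d → ℤ, (∀ i : Fin d, (i:ℕ) < d - g → x i = 0) →
    (∀ i : Fin d, |x i| ≤ (C:ℤ) * (q:ℤ)^((i:ℕ)+1)) → R d (ι d x) (L * q) := by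
  intro g
  induction g with
  | zero =>
      intro C hC
      refine ⟨1, ?_⟩
      intro q hq x hsupp hbound
      have hx : x = 0 := funext fun i => hsupp i (by omega)
      rw [hx, iota_zero]
      exact R_mono R_one (by omega)
  | succ g ih =>
      intro C hC
      by_cases hdg : g < d
      case neg =>
        obtain ⟨L, hL⟩ := ih C hC
        refine ⟨L, ?_⟩
        intro q hq x hsupp hbound
        exact hL q hq x (fun i hi => hsupp i (by omega)) hbound
      case pos =>
        set C1 : ℕ := C + d * ((C + 2) * d^d) + 1 with hC1
        obtain ⟨L2, hL2⟩ := ih C1 (by omega)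
        refine ⟨d * (2^d * ((C + 2) * 1) + 2^d * 2) + L2, ?_⟩
        intro q hq x hsupp hbound
        set J : ℕ := d - (g+1) with hJdef
        have hJd : J < d := by omega
        set jf : Fin d := ⟨J, hJd⟩ with hjf
        obtain ⟨s, hs1, hs2⟩ := digits q hq J (C:ℤ) (by exact_mod_cast hC) (x jf) (hbound jf)
        set F : ℕ → (Fin d → ℤ) := fun u =>
          Polynomial.aeval (shiftMap d) (mq q ^ u)
            (Pi.single (⟨J - u, by omega⟩ : Fin d) (s u)) with hF
        set W : Fin d → ℤ := ∑ u ∈ Finset.range (J+1), F u with hW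
        have hsnat : ∀ u, (s u).natAbs ≤ (C+2) * q := by
          intro u
          have h1 := hs2 u
          have h2 : ((s u).natAbs : ℤ) = |s u| := (Int.abs_eq_natAbs _).symm
          have h3 : (((C+2) * q : ℕ) : ℤ) = ((C:ℤ)+2) * q := by push_cast; ring
          omega
        -- entry formula for F
        have hFe : ∀ (u : ℕ) (i : Fin d), u ≤ J → F u i =
            if J - u ≤ (i:ℕ) then (mq q ^ u).coeff ((i:ℕ) - (J-u)) * s u else 0 := by
          intro u i hu
          rw [hF]
          show Polynomial.aeval (shiftMap d) (mq q ^ u)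
            (Pi.single (⟨J - u, by omega⟩ : Fin d) (s u)) i = _
          rw [aeval_single_entry]
        -- (ii) W jf = x jf
        have hWj : W jf = x jf := by
          rw [hW, Finset.sum_apply]
          have he : ∀ u ∈ Finset.range (J+1), F u jf = s u * (q:ℤ)^u := by
            intro u hu
            have hu' : u ≤ J := by have := Finset.mem_range.mp hu; omega
            rw [hFe u jf hu']
            have hjv : (jf:ℕ) = J := rfl
            rw [hjv, if_pos (by omega)]
            have h2 : J - (J - u) = u := by omega
            rw [h2, (pow_low_coeff (mq q) (mq_coeff_zero q) u).2, mq_coeff_one]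
            ring
          rw [Finset.sum_congr rfl he]
          exact hs1.symm
        -- (iii) W vanishes below J
        have hWlow : ∀ i : Fin d, (i:ℕ) < J → W i = 0 := by
          intro i hi
          rw [hW, Finset.sum_apply]
          refine Finset.sum_eq_zero fun u hu => ?_
          have hu' : u ≤ J := by have := Finset.mem_range.mp hu; omega
          rw [hFe u i hu']
          by_cases hc : J - u ≤ (i:ℕ)
          · rw [if_pos hc, (pow_low_coeff (mq q) (mq_coeff_zero q) u).1 _ (by omega), zero_mul]
          · rw [if_neg hc]
        -- (iv) bound on W
        have hFbound : ∀ (u : ℕ) (i : Fin d), u ≤ J →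
            |F u i| ≤ (((C + 2) * d^d : ℕ) : ℤ) * (q:ℤ)^((i:ℕ)+1) := by
          intro u i hu
          rw [hFe u i hu]
          have hq1 : (1:ℤ) ≤ (q:ℤ) := by exact_mod_cast hq
          have hd1 : (1:ℤ) ≤ (d:ℤ) := by exact_mod_cast hd
          by_cases hc : J - u ≤ (i:ℕ)
          · rw [if_pos hc, abs_mul]
            set e : ℕ := (i:ℕ) - (J - u) with he
            have h1 : |(mq q ^ u).coeff e| ≤ ((u:ℤ) * q)^e :=
              coeff_pow_bound (mq q) (q:ℤ) (by positivity) (mq_coeff_bound q) u e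
            have h2 : ((u:ℤ) * q)^e ≤ ((d:ℤ) * q)^e := by
              refine pow_le_pow_left₀ (by positivity) ?_ e
              have : (u:ℤ) ≤ (d:ℤ) := by exact_mod_cast le_trans hu (le_of_lt hJd)
              nlinarith
            have h3 : ((d:ℤ) * q)^e ≤ ((d:ℤ) * q)^(i:ℕ) := by
              refine pow_le_pow_right₀ (by nlinarith) (by omega)
            have h4 : ((d:ℤ) * q)^(i:ℕ) = (d:ℤ)^(i:ℕ) * (q:ℤ)^(i:ℕ) := mul_pow _ _ _
            have h5 : (d:ℤ)^(i:ℕ) ≤ (d:ℤ)^d := pow_le_pow_right₀ hd1 (le_of_lt i.isLt)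
            have h6 : |s u| ≤ ((C:ℤ)+2) * q := hs2 u
            have hcast : (((C + 2) * d^d : ℕ) : ℤ) = ((C:ℤ)+2) * (d:ℤ)^d := by push_cast; ring
            rw [hcast]
            have hqi : (0:ℤ) < (q:ℤ)^(i:ℕ) := by positivity
            calc |(mq q ^ u).coeff e| * |s u| ≤ ((d:ℤ)^(i:ℕ) * (q:ℤ)^(i:ℕ)) * (((C:ℤ)+2) * q) := by
                  have hA : |(mq q ^ u).coeff e| ≤ (d:ℤ)^(i:ℕ) * (q:ℤ)^(i:ℕ) := by
                    rw [← h4]; exact le_trans h1 (le_trans h2 h3)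
                  exact mul_le_mul hA h6 (abs_nonneg _) (by positivity)
              _ ≤ ((C:ℤ)+2) * (d:ℤ)^d * (q:ℤ)^((i:ℕ)+1) := by
                  have : (q:ℤ)^((i:ℕ)+1) = (q:ℤ)^(i:ℕ) * q := by ring
                  rw [this]
                  nlinarith [mul_le_mul_of_nonneg_right h5
                    (by positivity : (0:ℤ) ≤ (q:ℤ)^(i:ℕ) * (((C:ℤ)+2) * q))]
          · rw [if_neg hc]
            have : (0:ℤ) ≤ (((C + 2) * d^d : ℕ) : ℤ) * (q:ℤ)^((i:ℕ)+1) := by positivity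
            simpa using this
        have hWbound : ∀ i : Fin d,
            |W i| ≤ ((d * ((C + 2) * d^d) : ℕ) : ℤ) * (q:ℤ)^((i:ℕ)+1) := by
          intro i
          rw [hW, Finset.sum_apply]
          refine le_trans (Finset.abs_sum_le_sum_abs _ _) ?_
          have h1 : ∀ u ∈ Finset.range (J+1),
              |F u i| ≤ (((C + 2) * d^d : ℕ) : ℤ) * (q:ℤ)^((i:ℕ)+1) := by
            intro u hu
            exact hFbound u i (by have := Finset.mem_range.mp hu; omega)
          refine le_trans (Finset.sum_le_sum h1) ?_
          rw [Finset.sum_const, Finset.card_range, nsmul_eq_mul]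
          have h2 : ((J+1 : ℕ):ℤ) ≤ (d:ℤ) := by exact_mod_cast hJd
          have h3 : (0:ℤ) ≤ (((C + 2) * d^d : ℕ) : ℤ) * (q:ℤ)^((i:ℕ)+1) := by positivity
          have hcast : ((d * ((C + 2) * d^d) : ℕ) : ℤ)
              = (d:ℤ) * (((C + 2) * d^d : ℕ) : ℤ) := by push_cast; ring
          rw [hcast]
          nlinarith
        -- x' and IH
        set x' : Fin d → ℤ := x - W with hx'
        have hsupp' : ∀ i : Fin d, (i:ℕ) < d - g → x' i = 0 := by
          intro i hi
          have hJg : d - g = J + 1 := by omega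
          rw [hx']
          show x i - W i = 0
          by_cases hiJ : (i:ℕ) < J
          · rw [hsupp i (by omega), hWlow i hiJ, sub_zero]
          · have : (i:ℕ) = J := by omega
            have hieq : i = jf := Fin.ext this
            rw [hieq, hWj, sub_self]
        have hbound' : ∀ i : Fin d, |x' i| ≤ ((C1:ℕ):ℤ) * (q:ℤ)^((i:ℕ)+1) := by
          intro i
          rw [hx']
          show |x i - W i| ≤ _
          have h1 := hbound i
          have h2 := hWbound i
          have h3 : |x i - W i| ≤ |x i| + |W i| := abs_sub _ _
          have hcast : ((C1:ℕ):ℤ) = (C:ℤ) + ((d * ((C + 2) * d^d) : ℕ) : ℤ) + 1 := by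
            rw [hC1]; push_cast; ring
          have h4 : (0:ℤ) ≤ (q:ℤ)^((i:ℕ)+1) := by positivity
          rw [hcast]
          nlinarith
        have hRx' := hL2 q hq x' hsupp' hbound'
        -- cost of W
        have hRW : R d (ι d W) ((J+1) * (2^d * ((C+2) * q) + 2^d * (2 * q))) := by
          rw [hW]
          refine R_iota_sum F _ (J+1) fun u hu => ?_
          have hu' : u ≤ J := by omega
          have h1 := R_gadget q (⟨J - u, by omega⟩ : Fin d) (s u) u
          have h1' : R d (ι d (F u)) (2^u * (s u).natAbs + (2^u - 1) * (2 * q)) := by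
            simp only [hF]
            exact h1
          refine R_mono h1' ?_
          have h2 : (2:ℕ)^u ≤ 2^d := Nat.pow_le_pow_right (by omega) (by omega)
          have h3 := hsnat u
          have h4 : 2^u * (s u).natAbs ≤ 2^d * ((C+2) * q) :=
            Nat.mul_le_mul h2 h3
          have h5 : (2^u - 1) * (2 * q) ≤ 2^d * (2 * q) :=
            Nat.mul_le_mul (le_trans (Nat.sub_le _ _) h2) le_rfl
          exact Nat.add_le_add h4 h5
        -- combine
        have hxeq : x = W + x' := by
          rw [hx']; funext i; show x i = W i + (x i - W i); ring
        rw [hxeq, iota_add]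
        have := R_mul hRW hRx'
        refine R_mono this ?_
        have h6 : (J+1) ≤ d := by omega
        have h7 : (J+1) * (2^d * ((C+2) * q) + 2^d * (2 * q))
            ≤ d * (2^d * ((C+2) * q) + 2^d * (2 * q)) := Nat.mul_le_mul_right _ h6
        have h8 : d * (2^d * ((C+2) * q) + 2^d * (2 * q))
            = (d * (2^d * ((C + 2) * 1) + 2^d * 2)) * q := by ring
        have h9 : (d * (2^d * ((C + 2) * 1) + 2^d * 2) + L2) * q
            = (d * (2^d * ((C + 2) * 1) + 2^d * 2)) * q + L2 * q := by ring
        omega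

theorem R_exists (hd : 1 ≤ d) (g : Gamma d) : ∃ c : ℕ, R d g c := by
  obtain ⟨L, hL⟩ := build hd d ((∑ i : Fin d, (vec g i).natAbs) + 1) (by omega)
  have h1 : R d (ι d (vec g)) (L * 1) := by
    refine hL 1 le_rfl (vec g) (fun i hi => absurd hi (by omega)) ?_
    intro i
    have h2 : (vec g i).natAbs ≤ ∑ i' : Fin d, (vec g i').natAbs :=
      Finset.single_le_sum (f := fun i' : Fin d => (vec g i').natAbs)
        (fun _ _ => Nat.zero_le _) (Finset.mem_univ i)
    have h3 : |vec g i| = ((vec g i).natAbs : ℤ) := Int.abs_eq_natAbs _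
    rw [h3]
    have h4 : ((1:ℕ):ℤ)^((i:ℕ)+1) = 1 := by norm_num
    rw [h4, mul_one]
    exact_mod_cast Nat.le_succ_of_le h2
  have h2 := R_mul h1 (R_tau (d := d) (kk g))
  rw [← decomp g] at h2
  exact ⟨_, h2⟩

theorem roots_are_short' (d : ℕ) (hd : 1 ≤ d) :
    ∃ K : ℕ, 0 < K ∧ ∀ p n : ℕ, 1 ≤ p → 1 ≤ n → ∀ γ h : Gamma d,
      h ^ p = γ → wl d γ ≤ n → wl d h ≤ K * n := by
  obtain ⟨L, hL⟩ := build hd d (4^d) (Nat.one_le_pow _ _ (by omega))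
  refine ⟨L * (d + 3) + 1, by omega, ?_⟩
  intro p n hp hn γ h hpow hwl
  -- a geodesic word for γ
  have hne : {m | ∃ l : List (Gamma d), l.length = m ∧
      (∀ x ∈ l, x ∈ gens d ∨ x⁻¹ ∈ gens d) ∧ l.prod = γ}.Nonempty := by
    obtain ⟨c, l, _, h2, h3⟩ := R_exists hd γ
    exact ⟨l.length, l, rfl, h2, h3⟩
  obtain ⟨l, hlen, hmem, hprod⟩ := Nat.sInf_mem hne
  have hlen' : l.length ≤ n := by
    have : sInf {m | ∃ l : List (Gamma d), l.length = m ∧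
        (∀ x ∈ l, x ∈ gens d ∨ x⁻¹ ∈ gens d) ∧ l.prod = γ} ≤ n := hwl
    omega
  obtain ⟨hkb, hvb⟩ := word_bound hd l hmem
  rw [hprod] at hkb hvb
  -- notation
  set nQ : ℕ := n + d + 2 with hnQ
  have hQ1 : (1:ℤ) ≤ (nQ:ℤ) := by exact_mod_cast (by omega : 1 ≤ nQ)
  have hy : ∀ j : Fin d, |vec γ j| ≤ ((nQ:ℤ))^((j:ℕ)+1) := by
    intro j
    refine le_trans (hvb j) ?_
    have h1 : (l.length : ℤ) ≤ (nQ:ℤ) := by exact_mod_cast (by omega : l.length ≤ nQ)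
    have h2 : (l.length : ℤ) + 2 ≤ (nQ:ℤ) := by exact_mod_cast (by omega : l.length + 2 ≤ nQ)
    have h3 : ((l.length : ℤ) + 2)^(j:ℕ) ≤ (nQ:ℤ)^(j:ℕ) :=
      pow_le_pow_left₀ (by positivity) h2 _
    have h4 : (0:ℤ) ≤ (l.length : ℤ) := by positivity
    calc (l.length : ℤ) * ((l.length : ℤ) + 2)^(j:ℕ) ≤ (nQ:ℤ) * (nQ:ℤ)^(j:ℕ) := by
          refine mul_le_mul h1 h3 (by positivity) (by positivity)
      _ = (nQ:ℤ)^((j:ℕ)+1) := by ring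
  -- the root equation
  have hvp := (vec_pow h p).1
  have hkp := (vec_pow h p).2
  rw [hpow] at hvp hkp
  have hkn : |kk γ| ≤ (n:ℤ) := le_trans hkb (by exact_mod_cast hlen')
  have hkh : |kk h| ≤ (n:ℤ) := by
    have h1 : |kk γ| = (p:ℤ) * |kk h| := by
      rw [hkp, abs_mul, abs_of_nonneg (by positivity : (0:ℤ) ≤ (p:ℤ))]
    have h2 : (1:ℤ) ≤ (p:ℤ) := by exact_mod_cast hp
    nlinarith [abs_nonneg (kk h), hkn]
  obtain ⟨S, hS1, hS2, hS3⟩ := exists_S hd p (kk h)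
  have heq : Polynomial.aeval (shiftMap d) S (vec h) = vec γ := by
    rw [hS1, LinearMap.sum_apply]
    exact hvp.symm
  have hSr : ∀ r, |S.coeff r| ≤ (p:ℤ) * ((nQ:ℤ))^r := by
    intro r
    refine le_trans (hS3 r) ?_
    have h1 : |(p:ℤ) * kk h| + 1 ≤ (nQ:ℤ) := by
      rw [← hkp]
      have : (n:ℤ) + 1 ≤ (nQ:ℤ) := by
        rw [hnQ]; push_cast; omega
      linarith [hkn]
    have h2 : (|(p:ℤ) * kk h| + 1)^r ≤ (nQ:ℤ)^r :=
      pow_le_pow_left₀ (by positivity) h1 r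
    have h3 : (0:ℤ) ≤ (p:ℤ) := by positivity
    nlinarith
  have hx := root_coord_bound hd hp hQ1 hS2 hSr hy heq
  have hx' : ∀ i : Fin d, |vec h i| ≤ ((4^d : ℕ):ℤ) * ((nQ:ℤ))^((i:ℕ)+1) := by
    intro i
    refine le_trans (hx i) ?_
    have h1 : (4:ℤ)^(i:ℕ) ≤ (4:ℤ)^d := pow_le_pow_right₀ (by norm_num) (le_of_lt i.isLt)
    have h2 : (0:ℤ) ≤ ((nQ:ℤ))^((i:ℕ)+1) := by positivity
    have h3 : (((4:ℕ)^d : ℕ):ℤ) = (4:ℤ)^d := by push_cast; ring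
    rw [h3]
    nlinarith
  have hR1 : R d (ι d (vec h)) (L * nQ) :=
    hL nQ (by omega) (vec h) (fun i hi => absurd hi (by omega)) hx'
  have hR2 : R d h (L * nQ + (kk h).natAbs) := by
    have := R_mul hR1 (R_tau (d := d) (kk h))
    rw [← decomp h] at this
    exact this
  refine le_trans (wl_le_of_R hR2) ?_
  have h1 : (kk h).natAbs ≤ n := by
    have : ((kk h).natAbs : ℤ) = |kk h| := (Int.abs_eq_natAbs _).symm
    omega
  have h2 : nQ ≤ (d + 3) * n := by
    rw [hnQ]
    have : d + 3 ≤ (d+3) * n := Nat.le_mul_of_pos_right _ (by omega)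
    nlinarith
  have h3 : L * nQ ≤ L * ((d + 3) * n) := Nat.mul_le_mul_left _ h2
  have h4 : L * ((d+3) * n) = (L * (d+3)) * n := by ring
  have h5 : (L * (d + 3) + 1) * n = (L * (d+3)) * n + n := by ring
  omega

/-- Corollary 5.2: there is `K_d > 0` such that if `h^p = γ` in `Γ_d` and `d(1,γ) ≤ n`, then
`d(1,h) ≤ K_d n`. -/
theorem roots_are_short (d : ℕ) (hd : 1 ≤ d) :
    ∃ K : ℕ, 0 < K ∧ ∀ p n : ℕ, 1 ≤ p → 1 ≤ n → ∀ γ h : Gamma d,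
      h ^ p = γ → wl d γ ≤ n → wl d h ≤ K * n := by
  exact roots_are_short' d hd

end ModelFiliform
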